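/- arXiv:1203.3128 — 4 statements merged into one kernel-verified Lean document; each statement's English description precedes it below -/
import Mathlib

section
/- For the 2×2 coordinate interleaved orthogonal design with codeword matrices diag(x₁ᴿ + j x₂ᴵ, x₂ᴿ + j x₁ᴵ) over a signal set S ⊂ ℂ, the codeword difference matrix diag(Δx₁ᴿ + j Δx₂ᴵ, Δx₂ᴿ + j Δx₁ᴵ) is singular (non-invertible) for some (Δx₁, Δx₂) ≠ (0,0) with Δx₁, Δx₂ ∈ ΔS if and only if the coordinate product distance of S is zero, i.e., there exist distinct x, y ∈ S with (xᴿ - yᴿ)(xᴵ - yᴵ) = 0. -/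
open Complex in
lemma aux_nonunit (a b : ℂ) :
    ¬ IsUnit (Matrix.diagonal ![a, b]) ↔ a = 0 ∨ b = 0 := by
  rw [Matrix.isUnit_iff_isUnit_det, Matrix.det_diagonal, isUnit_iff_ne_zero]
  simp only [Fin.prod_univ_two, Matrix.cons_val_zero, Matrix.cons_val_one, Matrix.head_cons,
    mul_ne_zero_iff, not_and_or, not_not]
  try tauto

open Complex in
lemma aux_entry (a b : ℂ) : (a.re : ℂ) + I * b.im = 0 ↔ a.re = 0 ∧ b.im = 0 := by
  constructor
  · intro h
    have hre := congrArg Complex.re h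
    have him := congrArg Complex.im h
    simp at hre him
    exact ⟨hre, him⟩
  · rintro ⟨h1, h2⟩; simp [h1, h2]

open Complex in
theorem stmt_3 (S : Finset ℂ) :
    let ΔS : Set ℂ := {x | ∃ s ∈ S, ∃ s' ∈ S, x = s - s'}
    (∃ Δx₁ ∈ ΔS, ∃ Δx₂ ∈ ΔS, (Δx₁, Δx₂) ≠ (0, 0) ∧
      ¬ IsUnit (Matrix.diagonal ![(Δx₁.re : ℂ) + I * Δx₂.im, (Δx₂.re : ℂ) + I * Δx₁.im]))
    ↔ (∃ x ∈ S, ∃ y ∈ S, x ≠ y ∧ (x.re - y.re) * (x.im - y.im) = 0) := by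
  intro ΔS
  constructor
  · rintro ⟨d1, ⟨s1, hs1, t1, ht1, h1⟩, d2, ⟨s2, hs2, t2, ht2, h2⟩, hne, hnu⟩
    rw [aux_nonunit] at hnu
    rcases hnu with h | h <;> rw [aux_entry] at h
    · -- d1.re = 0, d2.im = 0
      rcases eq_or_ne d1 0 with h10 | h10
      · have h20 : d2 ≠ 0 := by
          intro h20; exact hne (by simp [h10, h20])
        refine ⟨s2, hs2, t2, ht2, ?_, ?_⟩
        · intro he; exact h20 (by simp [h2, he])
        · have : (s2 - t2).im = 0 := h2 ▸ h.2
          simp [Complex.sub_im] at this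
          simp [this]
      · refine ⟨s1, hs1, t1, ht1, ?_, ?_⟩
        · intro he; exact h10 (by simp [h1, he])
        · have : (s1 - t1).re = 0 := h1 ▸ h.1
          simp [Complex.sub_re] at this
          simp [this]
    · -- d2.re = 0, d1.im = 0
      rcases eq_or_ne d2 0 with h20 | h20
      · have h10 : d1 ≠ 0 := by
          intro h10; exact hne (by simp [h10, h20])
        refine ⟨s1, hs1, t1, ht1, ?_, ?_⟩
        · intro he; exact h10 (by simp [h1, he])
        · have : (s1 - t1).im = 0 := h1 ▸ h.2
          simp [Complex.sub_im] at this
          simp [this]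
      · refine ⟨s2, hs2, t2, ht2, ?_, ?_⟩
        · intro he; exact h20 (by simp [h2, he])
        · have : (s2 - t2).re = 0 := h2 ▸ h.1
          simp [Complex.sub_re] at this
          simp [this]
  · rintro ⟨x, hx, y, hy, hxy, hprod⟩
    have hd : (x - y : ℂ) ∈ ΔS := ⟨x, hx, y, hy, rfl⟩
    have h0 : (0 : ℂ) ∈ ΔS := ⟨x, hx, x, hx, by ring⟩
    have hne0 : x - y ≠ 0 := sub_ne_zero.mpr hxy
    rcases mul_eq_zero.mp hprod with h | h
    · refine ⟨x - y, hd, 0, h0, ?_, ?_⟩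
      · intro he; exact hne0 (congrArg Prod.fst he)
      · rw [aux_nonunit]
        left; rw [aux_entry]
        exact ⟨by simpa [Complex.sub_re] using h, by simp⟩
    · refine ⟨0, h0, x - y, hd, ?_, ?_⟩
      · intro he; exact hne0 (congrArg Prod.snd he)
      · rw [aux_nonunit]
        left; rw [aux_entry]
        constructor
        · simp
        · simpa [Complex.sub_im] using h
end

section
/- Let φ_g = arctan(√5) and suppose Δx_{A1}, Δx_{A2}, Δx_{B1}, Δx_{B2} ∈ ℚ(i) with (Δx_{A1}, Δx_{A2}) ≠ (0,0) and (Δx_{B1}, Δx_{B2}) ≠ (0,0). Then the 2×2 matrix [[Δx_{A1}, Δx_{A2}], [Δx_{B1} cos φ_g + Δx_{B2} sin φ_g, e^{iπ/4}(-Δx_{B1} sin φ_g + Δx_{B2} cos φ_g)]] has nonzero determinant. -/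
open Complex

lemma adj_repr {x : ℂ} (hx : x ∈ Algebra.adjoin ℚ ({I} : Set ℂ)) :
    ∃ p q : ℚ, x = (p : ℂ) + (q : ℂ) * I := by
  induction hx using Algebra.adjoin_induction with
  | mem x hx => exact ⟨0, 1, by simp [Set.mem_singleton_iff.mp hx]⟩
  | algebraMap r => exact ⟨r, 0, by simp⟩
  | add x y hx hy ihx ihy =>
      obtain ⟨p, q, rfl⟩ := ihx; obtain ⟨r, s, rfl⟩ := ihy
      exact ⟨p + r, q + s, by push_cast; ring⟩
  | mul x y hx hy ihx ihy =>
      obtain ⟨p, q, rfl⟩ := ihx; obtain ⟨r, s, rfl⟩ := ihy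
      refine ⟨p * r - q * s, p * s + q * r, ?_⟩
      push_cast
      linear_combination (q : ℂ) * (s : ℂ) * Complex.I_sq

lemma ratext {a b c d : ℚ} (h : (a : ℂ) + (b : ℂ) * I = (c : ℂ) + (d : ℂ) * I) :
    a = c ∧ b = d := by
  have h1 := congrArg Complex.re h
  have h2 := congrArg Complex.im h
  simp at h1 h2
  exact ⟨by exact_mod_cast h1, by exact_mod_cast h2⟩

-- Lemma A : separation over sqrt 5
lemma sqrt5_sep {x y : ℂ} (hx : x ∈ Algebra.adjoin ℚ ({I} : Set ℂ))
    (hy : y ∈ Algebra.adjoin ℚ ({I} : Set ℂ))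
    (h : x = ((Real.sqrt 5 : ℝ) : ℂ) * y) : x = 0 ∧ y = 0 := by
  obtain ⟨p, q, rfl⟩ := adj_repr hx
  obtain ⟨r, s, rfl⟩ := adj_repr hy
  have h5 : Irrational (Real.sqrt 5) := by
    simpa using (by norm_num : Nat.Prime 5).irrational_sqrt
  have hre : (p : ℝ) = Real.sqrt 5 * r := by
    have := congrArg Complex.re h; simpa using this
  have him : (q : ℝ) = Real.sqrt 5 * s := by
    have := congrArg Complex.im h; simpa using this
  have hr : r = 0 := by
    by_contra hr0
    exact h5 ⟨p / r, by push_cast; rw [div_eq_iff (by exact_mod_cast hr0)]; linarith [hre]⟩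
  have hs : s = 0 := by
    by_contra hs0
    exact h5 ⟨q / s, by push_cast; rw [div_eq_iff (by exact_mod_cast hs0)]; linarith [him]⟩
  have hp : p = 0 := by have := hre; rw [hr] at this; exact_mod_cast by simpa using this
  have hq : q = 0 := by have := him; rw [hs] at this; exact_mod_cast by simpa using this
  subst hr hs hp hq; simp

-- Lemma B : k*I is not a square in Q(i)
lemma not_sq_kI {x y : ℂ} (hx : x ∈ Algebra.adjoin ℚ ({I} : Set ℂ))
    (hy : y ∈ Algebra.adjoin ℚ ({I} : Set ℂ)) (k : ℚ)
    (hk : ¬ IsSquare (2 * |k|)) (h : x ^ 2 = (k : ℂ) * I * y ^ 2) :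
    x = 0 ∧ y = 0 := by
  have hk0 : k ≠ 0 := by rintro rfl; exact hk ⟨0, by norm_num⟩
  obtain ⟨p, q, hxe⟩ := adj_repr hx
  obtain ⟨r, s, hye⟩ := adj_repr hy
  suffices hy0 : y = 0 by
    refine ⟨?_, hy0⟩
    have hx2 : x ^ 2 = 0 := by rw [h, hy0]; ring
    exact pow_eq_zero_iff two_ne_zero |>.mp hx2
  by_contra hy0
  set N : ℚ := r ^ 2 + s ^ 2 with hN
  have hNne : N ≠ 0 := by
    intro h0
    apply hy0
    have hr : r = 0 := by nlinarith [sq_nonneg r, sq_nonneg s]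
    have hs : s = 0 := by nlinarith [sq_nonneg r, sq_nonneg s]
    rw [hye, hr, hs]; simp
  set P : ℚ := (p * r + q * s) / N with hP
  set Q : ℚ := (q * r - p * s) / N with hQ
  have hPr : P * r - Q * s = p := by rw [hP, hQ]; field_simp; try ring
  have hQr : P * s + Q * r = q := by rw [hP, hQ]; field_simp; try ring
  have hPc : (P : ℂ) * r - (Q : ℂ) * s = p := by exact_mod_cast congrArg (fun t : ℚ => (t : ℂ)) hPr
  have hQc : (P : ℂ) * s + (Q : ℂ) * r = q := by exact_mod_cast congrArg (fun t : ℚ => (t : ℂ)) hQr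
  have hz : x = ((P : ℂ) + (Q : ℂ) * I) * y := by
    rw [hxe, hye]
    linear_combination (-1 : ℂ) * hPc - I * hQc - (Q : ℂ) * (s : ℂ) * Complex.I_sq
  have h2 : (((P : ℂ) + (Q : ℂ) * I) ^ 2 - (k : ℂ) * I) * y ^ 2 = 0 := by
    rw [hz] at h; linear_combination h
  have hzz : ((P : ℂ) + (Q : ℂ) * I) ^ 2 = (k : ℂ) * I := by
    rcases mul_eq_zero.mp h2 with h3 | h3
    · exact sub_eq_zero.mp h3
    · exact absurd (pow_eq_zero_iff two_ne_zero |>.mp h3) hy0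
  have h3 : ((P ^ 2 - Q ^ 2 : ℚ) : ℂ) + ((2 * P * Q : ℚ) : ℂ) * I
      = ((0 : ℚ) : ℂ) + (k : ℂ) * I := by
    push_cast
    linear_combination hzz - (Q : ℂ) ^ 2 * Complex.I_sq
  obtain ⟨ha, hb⟩ := ratext h3
  have krel : k ^ 2 = (2 * P ^ 2) ^ 2 := by
    linear_combination (-(2 * P * Q + k)) * hb + (-4 * P ^ 2) * ha
  have habs : 2 * P ^ 2 = |k| := by
    have hfac : (2 * P ^ 2 - |k|) * (2 * P ^ 2 + |k|) = 0 := by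
      have hsq : |k| ^ 2 = k ^ 2 := sq_abs k
      linear_combination (-1) * krel - hsq
    rcases mul_eq_zero.mp hfac with h4 | h4
    · linarith
    · exfalso
      have : |k| = 0 := by nlinarith [sq_nonneg P, abs_nonneg k]
      exact hk0 (abs_eq_zero.mp this)
  exact hk ⟨2 * P, by linear_combination (-2) * habs⟩

open Complex in
theorem stmt_6 (a₁ a₂ b₁ b₂ : ℂ)
    (ha₁ : a₁ ∈ Algebra.adjoin ℚ ({I} : Set ℂ))
    (ha₂ : a₂ ∈ Algebra.adjoin ℚ ({I} : Set ℂ))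
    (hb₁ : b₁ ∈ Algebra.adjoin ℚ ({I} : Set ℂ))
    (hb₂ : b₂ ∈ Algebra.adjoin ℚ ({I} : Set ℂ))
    (hA : (a₁, a₂) ≠ (0, 0)) (hB : (b₁, b₂) ≠ (0, 0)) :
    let φg : ℝ := Real.arctan (Real.sqrt 5)
    Matrix.det !![a₁, a₂;
      b₁ * (Real.cos φg : ℂ) + b₂ * (Real.sin φg : ℂ),
      Complex.exp (Real.pi / 4 * I) * (-b₁ * (Real.sin φg : ℂ) + b₂ * (Real.cos φg : ℂ))] ≠ 0 := by
  intro φg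
  have hφ : φg = Real.arctan (Real.sqrt 5) := rfl
  have hA' : ¬(a₁ = 0 ∧ a₂ = 0) := by simpa [Prod.ext_iff] using hA
  have hB' : ¬(b₁ = 0 ∧ b₂ = 0) := by simpa [Prod.ext_iff] using hB
  have hI : I ∈ Algebra.adjoin ℚ ({I} : Set ℂ) := Algebra.subset_adjoin rfl
  have h5m : (5 : ℂ) ∈ Algebra.adjoin ℚ ({I} : Set ℂ) := by
    simpa using Subalgebra.algebraMap_mem (Algebra.adjoin ℚ ({I} : Set ℂ)) (5 : ℚ)
  have h2m : (2 : ℂ) ∈ Algebra.adjoin ℚ ({I} : Set ℂ) := by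
    simpa using Subalgebra.algebraMap_mem (Algebra.adjoin ℚ ({I} : Set ℂ)) (2 : ℚ)
  rw [Matrix.det_fin_two_of]
  intro h
  set E := Complex.exp (Real.pi / 4 * I) with hEdef
  have hE : E ^ 2 = I := by
    rw [hEdef, ← Complex.exp_nat_mul]
    have h2 : ((2 : ℕ) : ℂ) * ((Real.pi : ℂ) / 4 * I) = ((Real.pi / 2 : ℝ) : ℂ) * I := by
      push_cast; ring
    rw [h2, Complex.exp_mul_I]
    norm_cast
    rw [Real.cos_pi_div_two, Real.sin_pi_div_two]
    simp
  have h6 : (1 : ℝ) + Real.sqrt 5 ^ 2 = 6 := by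
    rw [Real.sq_sqrt (by norm_num : (0:ℝ) ≤ 5)]; norm_num
  have hsin : Real.sin φg = Real.sqrt 5 / Real.sqrt 6 := by
    rw [hφ, Real.sin_arctan, h6]
  have hcos : Real.cos φg = 1 / Real.sqrt 6 := by
    rw [hφ, Real.cos_arctan, h6]
  set S5 : ℂ := ((Real.sqrt 5 : ℝ) : ℂ) with hS5def
  set S6 : ℂ := ((Real.sqrt 6 : ℝ) : ℂ) with hS6def
  have hS5 : S5 ^ 2 = 5 := by
    rw [hS5def, ← Complex.ofReal_pow, Real.sq_sqrt (by norm_num : (0:ℝ) ≤ 5)]; norm_num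
  have hS6 : S6 ^ 2 = 6 := by
    rw [hS6def, ← Complex.ofReal_pow, Real.sq_sqrt (by norm_num : (0:ℝ) ≤ 6)]; norm_num
  have hS6ne : S6 ≠ 0 := by
    rw [hS6def]
    exact_mod_cast (Real.sqrt_pos.mpr (by norm_num : (0:ℝ) < 6)).ne'
  have hsc : ((Real.sin φg : ℝ) : ℂ) = S5 / S6 := by rw [hsin]; push_cast; ring
  have hcc : ((Real.cos φg : ℝ) : ℂ) = 1 / S6 := by rw [hcos]; push_cast; ring
  have hsq : (a₁ * (E * (-b₁ * (Real.sin φg : ℂ) + b₂ * (Real.cos φg : ℂ)))) ^ 2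
      = (a₂ * (b₁ * (Real.cos φg : ℂ) + b₂ * (Real.sin φg : ℂ))) ^ 2 := by
    rw [sub_eq_zero] at h; rw [h]
  have hsq' : a₁ ^ 2 * I * (-b₁ * (Real.sin φg : ℂ) + b₂ * (Real.cos φg : ℂ)) ^ 2
      = a₂ ^ 2 * (b₁ * (Real.cos φg : ℂ) + b₂ * (Real.sin φg : ℂ)) ^ 2 := by
    linear_combination hsq - a₁ ^ 2 * (-b₁ * (Real.sin φg : ℂ) + b₂ * (Real.cos φg : ℂ)) ^ 2 * hE
  have e1 : (-b₁ * (Real.sin φg : ℂ) + b₂ * (Real.cos φg : ℂ)) ^ 2 * 6 = (b₂ - b₁ * S5) ^ 2 := by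
    rw [hsc, hcc, ← hS6]; field_simp; try ring
  have e2 : (b₁ * (Real.cos φg : ℂ) + b₂ * (Real.sin φg : ℂ)) ^ 2 * 6 = (b₁ + b₂ * S5) ^ 2 := by
    rw [hsc, hcc, ← hS6]; field_simp; try ring
  have key : a₁ ^ 2 * I * (b₂ - b₁ * S5) ^ 2 = a₂ ^ 2 * (b₁ + b₂ * S5) ^ 2 := by
    linear_combination (-(a₁ ^ 2 * I)) * e1 + a₂ ^ 2 * e2 + 6 * hsq'
  have hXY : a₁ ^ 2 * I * (b₂ ^ 2 + 5 * b₁ ^ 2) - a₂ ^ 2 * (b₁ ^ 2 + 5 * b₂ ^ 2)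
      = S5 * (2 * a₂ ^ 2 * b₁ * b₂ + 2 * a₁ ^ 2 * I * b₁ * b₂) := by
    linear_combination key - (a₁ ^ 2 * I * b₁ ^ 2 - a₂ ^ 2 * b₂ ^ 2) * hS5
  have hXm : a₁ ^ 2 * I * (b₂ ^ 2 + 5 * b₁ ^ 2) - a₂ ^ 2 * (b₁ ^ 2 + 5 * b₂ ^ 2)
      ∈ Algebra.adjoin ℚ ({I} : Set ℂ) :=
    sub_mem (mul_mem (mul_mem (pow_mem ha₁ 2) hI)
        (add_mem (pow_mem hb₂ 2) (mul_mem h5m (pow_mem hb₁ 2))))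
      (mul_mem (pow_mem ha₂ 2) (add_mem (pow_mem hb₁ 2) (mul_mem h5m (pow_mem hb₂ 2))))
  have hYm : 2 * a₂ ^ 2 * b₁ * b₂ + 2 * a₁ ^ 2 * I * b₁ * b₂
      ∈ Algebra.adjoin ℚ ({I} : Set ℂ) :=
    add_mem (mul_mem (mul_mem (mul_mem h2m (pow_mem ha₂ 2)) hb₁) hb₂)
      (mul_mem (mul_mem (mul_mem (mul_mem h2m (pow_mem ha₁ 2)) hI) hb₁) hb₂)
  obtain ⟨hX0, hY0⟩ := sqrt5_sep hXm hYm hXY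
  have hk10 : ¬ IsSquare (2 * |(-5 : ℚ)|) := by
    rw [show (2 * |(-5 : ℚ)| : ℚ) = ((10 : ℕ) : ℚ) by norm_num, Rat.isSquare_natCast_iff]
    rintro ⟨r, hr⟩
    have h1 : r ≤ 3 := by nlinarith
    interval_cases r <;> omega
  have hk10' : ¬ IsSquare (2 * |(5 : ℚ)|) := by
    rw [show (2 * |(5 : ℚ)| : ℚ) = ((10 : ℕ) : ℚ) by norm_num, Rat.isSquare_natCast_iff]
    rintro ⟨r, hr⟩
    have h1 : r ≤ 3 := by nlinarith
    interval_cases r <;> omega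
  have hk2 : ¬ IsSquare (2 * |(-1 : ℚ)|) := by
    rw [show (2 * |(-1 : ℚ)| : ℚ) = ((2 : ℕ) : ℚ) by norm_num, Rat.isSquare_natCast_iff]
    rintro ⟨r, hr⟩
    have h1 : r ≤ 1 := by nlinarith
    interval_cases r <;> omega
  have hfac : b₁ * (b₂ * ((2 : ℂ) * (a₂ ^ 2 + a₁ ^ 2 * I))) = 0 := by
    linear_combination hY0
  rcases mul_eq_zero.mp hfac with hb10 | hfac2
  · subst hb10
    have hb2 : b₂ ≠ 0 := fun h0 => hB' ⟨rfl, h0⟩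
    have hfa : (a₁ ^ 2 * I - 5 * a₂ ^ 2) * b₂ ^ 2 = 0 := by linear_combination hX0
    rcases mul_eq_zero.mp hfa with h4 | h4
    · have hsq5 : a₁ ^ 2 = ((-5 : ℚ) : ℂ) * I * a₂ ^ 2 := by
        push_cast
        linear_combination (-I) * h4 + a₁ ^ 2 * Complex.I_sq
      obtain ⟨z1, z2⟩ := not_sq_kI ha₁ ha₂ (-5) hk10 hsq5
      exact hA' ⟨z1, z2⟩
    · exact hb2 (pow_eq_zero_iff two_ne_zero |>.mp h4)
  rcases mul_eq_zero.mp hfac2 with hb20 | h4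
  · subst hb20
    have hb1 : b₁ ≠ 0 := fun h0 => hB' ⟨h0, rfl⟩
    have hfa : (5 * a₁ ^ 2 * I - a₂ ^ 2) * b₁ ^ 2 = 0 := by linear_combination hX0
    rcases mul_eq_zero.mp hfa with h4 | h4
    · have hsq5 : a₂ ^ 2 = ((5 : ℚ) : ℂ) * I * a₁ ^ 2 := by
        push_cast
        linear_combination (-1 : ℂ) * h4
      obtain ⟨z1, z2⟩ := not_sq_kI ha₂ ha₁ 5 hk10' hsq5
      exact hA' ⟨z2, z1⟩
    · exact hb1 (pow_eq_zero_iff two_ne_zero |>.mp h4)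
  · have hsqm : a₂ ^ 2 = ((-1 : ℚ) : ℂ) * I * a₁ ^ 2 := by
      push_cast
      linear_combination (1 / 2 : ℂ) * h4
    obtain ⟨z1, z2⟩ := not_sq_kI ha₂ ha₁ (-1) hk2 hsqm
    exact hA' ⟨z2, z1⟩
end

section
/- Let S ⊂ ℂ be a finite set whose elements lie in the Gaussian integers ℤ[i]. Let φ = (1+√5)/2, φ̄ = (1-√5)/2, α = 1+i-iφ, ᾱ = 1+i-iφ̄. For any Δx_A = (a₁, a₂) and Δx_B = (b₁, b₂) in (ΔS)² with Δx_A ≠ 0 and Δx_B ≠ 0, the matrix (1/√5)·[[a₁α + a₂αφ, a₁ᾱ + a₂ᾱφ̄], [i b₁α + i b₂αφ, b₁ᾱ + b₂ᾱφ̄]] is invertible. -/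
open Complex GaussianInt

lemma sqrt5_irr : Irrational (Real.sqrt 5) := by
  simpa using (by norm_num : Nat.Prime 5).irrational_sqrt

lemma aux_int (m n : ℤ) (h : (m:ℝ) + Real.sqrt 5 * n = 0) : m = 0 ∧ n = 0 := by
  rcases eq_or_ne n 0 with hn | hn
  · subst hn
    refine ⟨by exact_mod_cast by simpa using h, rfl⟩
  · exfalso
    refine sqrt5_irr ⟨-m/n, ?_⟩
    have hn' : (n:ℝ) ≠ 0 := Int.cast_ne_zero.mpr hn
    push_cast
    field_simp
    linarith [h]

lemma aux_sq (p r : ℤ) (h : p^2 = 5 * r^2) : p = 0 ∧ r = 0 := by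
  rcases eq_or_ne r 0 with hr | hr
  · subst hr
    simp at h
    exact ⟨pow_eq_zero_iff (two_ne_zero).elim |>.mp (by simpa using h), rfl⟩
  · exfalso
    have hr' : (r:ℝ) ≠ 0 := Int.cast_ne_zero.mpr hr
    have h1 : ((p:ℝ)/r)^2 = 5 := by
      field_simp
      exact_mod_cast (h.trans (mul_comm _ _))
    have h2 : Real.sqrt 5 = |(p:ℝ)/r| := by
      rw [← h1, Real.sqrt_sq_eq_abs]
    exact sqrt5_irr ⟨|(p:ℚ)/r|, by rw [h2]; push_cast; ring⟩


lemma aux_main (p q r s : ℤ) (h1 : p^2 - q^2 = 5*(r^2 - s^2)) (h2 : p*q = 5*(r*s)) :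
    p = 0 ∧ q = 0 ∧ r = 0 ∧ s = 0 := by
  have key2 : (p^2 + q^2 - 5*(r^2+s^2)) * (p^2 + q^2 + 5*(r^2+s^2)) = 0 := by
    linear_combination (p^2 - q^2 + 5*r^2 - 5*s^2) * h1 + (4*(p*q + 5*r*s)) * h2
  have hps : p^2 = 5*r^2 ∧ q^2 = 5*s^2 := by
    rcases mul_eq_zero.mp key2 with h | h
    · constructor <;> linarith
    · have hp0 : p^2 = 0 := by nlinarith [sq_nonneg p, sq_nonneg q, sq_nonneg r, sq_nonneg s]
      have hr0 : r^2 = 0 := by nlinarith [sq_nonneg p, sq_nonneg q, sq_nonneg r, sq_nonneg s]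
      have hq0 : q^2 = 0 := by nlinarith [sq_nonneg p, sq_nonneg q, sq_nonneg r, sq_nonneg s]
      have hs0 : s^2 = 0 := by nlinarith [sq_nonneg p, sq_nonneg q, sq_nonneg r, sq_nonneg s]
      constructor <;> linarith
  obtain ⟨hpr, hqs⟩ := hps
  obtain ⟨hp0, hr0⟩ := aux_sq p r hpr
  obtain ⟨hq0, hs0⟩ := aux_sq q s hqs
  exact ⟨hp0, hq0, hr0, hs0⟩

open Complex in
theorem stmt_13 (S : Finset ℂ)
    (hS : ∀ s ∈ S, ∃ a b : ℤ, s = (a : ℂ) + (b : ℂ) * I)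
    (a₁ a₂ b₁ b₂ : ℂ)
    (ha₁ : a₁ ∈ {x : ℂ | ∃ s ∈ S, ∃ s' ∈ S, x = s - s'})
    (ha₂ : a₂ ∈ {x : ℂ | ∃ s ∈ S, ∃ s' ∈ S, x = s - s'})
    (hb₁ : b₁ ∈ {x : ℂ | ∃ s ∈ S, ∃ s' ∈ S, x = s - s'})
    (hb₂ : b₂ ∈ {x : ℂ | ∃ s ∈ S, ∃ s' ∈ S, x = s - s'})
    (hA : (a₁, a₂) ≠ (0, 0)) (hB : (b₁, b₂) ≠ (0, 0)) :
    let φ : ℂ := ((1 + Real.sqrt 5) / 2 : ℝ)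
    let φb : ℂ := ((1 - Real.sqrt 5) / 2 : ℝ)
    let α : ℂ := 1 + I - I * φ
    let αb : ℂ := 1 + I - I * φb
    IsUnit (((Real.sqrt 5 : ℂ))⁻¹ •
      !![a₁ * α + a₂ * α * φ, a₁ * αb + a₂ * αb * φb;
         I * b₁ * α + I * b₂ * α * φ, b₁ * αb + b₂ * αb * φb]) := by
  intro φ φb α αb
  have hs0 : Real.sqrt 5 ≠ 0 := by positivity
  have ht0 : (Real.sqrt 5 : ℂ) ≠ 0 := Complex.ofReal_ne_zero.mpr hs0
  have ht2 : (Real.sqrt 5 : ℂ)^2 = 5 := by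
    rw [← Complex.ofReal_pow, Real.sq_sqrt (by norm_num : (5:ℝ) ≥ 0)]
    norm_num
  have hφ : φ = (1 + (Real.sqrt 5 : ℂ))/2 := by simp only [φ]; push_cast; ring
  have hφb : φb = (1 - (Real.sqrt 5 : ℂ))/2 := by simp only [φb]; push_cast; ring
  have hα : α = 1 + I - I * φ := rfl
  have hαb' : αb = 1 + I - I * φb := rfl
  -- Gaussian integer representations
  have key : ∀ x ∈ {x : ℂ | ∃ s ∈ S, ∃ s' ∈ S, x = s - s'}, ∃ z : GaussianInt, x = z := by
    rintro x ⟨s, hs, s', hs', rfl⟩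
    obtain ⟨a, b, rfl⟩ := hS s hs
    obtain ⟨c, d, rfl⟩ := hS s' hs'
    exact ⟨⟨a - c, b - d⟩, by rw [toComplex_def']; push_cast; ring⟩
  obtain ⟨z₁, hz₁⟩ := key _ ha₁
  obtain ⟨z₂, hz₂⟩ := key _ ha₂
  obtain ⟨w₁, hw₁⟩ := key _ hb₁
  obtain ⟨w₂, hw₂⟩ := key _ hb₂
  rw [Matrix.isUnit_iff_isUnit_det, Matrix.det_smul, Matrix.det_fin_two_of,
    isUnit_iff_ne_zero]
  apply mul_ne_zero
  · exact pow_ne_zero _ (inv_ne_zero ht0)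
  -- factor the determinant
  have hab : α * αb = 2 + I := by
    rw [hα, hαb', hφ, hφb]
    linear_combination (-I^2/4) * ht2 + (-1 : ℂ) * Complex.I_sq
  have hQ : (a₁ + a₂*φ) * (b₁ + b₂*φb) - I * (a₁ + a₂*φb) * (b₁ + b₂*φ)
      = ((1 - I) * (2*(a₁*b₁ - a₂*b₂) + a₁*b₂ + a₂*b₁)
        + (Real.sqrt 5 : ℂ) * (1 + I) * (a₂*b₁ - a₁*b₂)) / 2 := by
    rw [hφ, hφb]
    linear_combination (-(1-I)*a₂*b₂/4) * ht2
  have hD : (a₁ * α + a₂ * α * φ) * (b₁ * αb + b₂ * αb * φb)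
      - (a₁ * αb + a₂ * αb * φb) * (I * b₁ * α + I * b₂ * α * φ)
      = (α * αb) * ((a₁ + a₂*φ) * (b₁ + b₂*φb) - I * (a₁ + a₂*φb) * (b₁ + b₂*φ)) := by
    ring
  rw [hD, hab, hQ]
  apply mul_ne_zero
  · intro h
    have := congrArg Complex.re h
    simp at this
  apply div_ne_zero _ two_ne_zero
  -- the key quantity K ≠ 0
  set U : GaussianInt := 2*(z₁*w₁ - z₂*w₂) + z₁*w₂ + z₂*w₁ with hU
  set V : GaussianInt := z₂*w₁ - z₁*w₂ with hV
  have hu : 2*(a₁*b₁ - a₂*b₂) + a₁*b₂ + a₂*b₁ = (U : ℂ) := by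
    rw [hz₁, hz₂, hw₁, hw₂, hU]
    simp only [map_add, map_mul, map_sub, map_ofNat]
  have hv : a₂*b₁ - a₁*b₂ = (V : ℂ) := by
    rw [hz₁, hz₂, hw₁, hw₂, hV]
    simp only [map_add, map_mul, map_sub]
  rw [hu, hv]
  intro hK0
  -- from K = 0 deduce U = 0 and V = 0
  have hK' : (U : ℂ) + (Real.sqrt 5 : ℂ) * I * (V : ℂ) = 0 := by
    linear_combination ((1+I)/2) * hK0
      + (((U:ℂ) - (Real.sqrt 5 : ℂ)*(V:ℂ))/2) * Complex.I_sq
  have hre := congrArg Complex.re hK'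
  have him := congrArg Complex.im hK'
  simp [Complex.add_re, Complex.mul_re, Complex.mul_im] at hre him
  rw [show ((-(√5 * (GaussianInt.toComplex V).im)) : ℝ) = √5 * (((-V.im : ℤ) : ℝ)) by push_cast [GaussianInt.intCast_im]; ring, ← GaussianInt.intCast_re] at hre
  rw [← GaussianInt.intCast_re, ← GaussianInt.intCast_im] at him
  obtain ⟨hU1, hV2⟩ := aux_int U.re (-V.im) hre
  obtain ⟨hU2, hV1⟩ := aux_int U.im V.re him
  have hU0 : U = 0 := by ext <;> simp [hU1, hU2]
  have hV0 : V = 0 := by ext <;> simp [hV1, by simpa using hV2]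
  have hu0 : 2*(a₁*b₁ - a₂*b₂) + a₁*b₂ + a₂*b₁ = 0 := by rw [hu, hU0, map_zero]
  have hv0 : a₂*b₁ - a₁*b₂ = 0 := by rw [hv, hV0, map_zero]
  have hN1 : (a₁^2 + a₁*a₂ - a₂^2) * b₁ = 0 := by
    linear_combination (a₁/2)*hu0 + (a₁/2 - a₂)*hv0
  have hN2 : (a₁^2 + a₁*a₂ - a₂^2) * b₂ = 0 := by
    linear_combination (a₂/2)*hu0 + (-a₂/2 - a₁)*hv0
  have hN : a₁^2 + a₁*a₂ - a₂^2 = 0 := by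
    rcases mul_eq_zero.mp hN1 with h | h
    · exact h
    rcases mul_eq_zero.mp hN2 with h' | h'
    · exact h'
    exact absurd (by rw [h, h'] : (b₁, b₂) = (0,0)) hB
  have hNz : z₁^2 + z₁*z₂ - z₂^2 = 0 := by
    apply toComplex_injective
    rw [map_zero]
    push_cast [map_add, map_sub, map_mul, map_pow]
    rw [← hz₁, ← hz₂]
    exact hN
  have hw2 : (2*z₁ + z₂)^2 = 5 * z₂^2 := by linear_combination (4:GaussianInt)*hNz
  have h1 := congrArg Zsqrtd.re hw2
  have h2 := congrArg Zsqrtd.im hw2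
  simp [pow_two, Zsqrtd.re_mul, Zsqrtd.im_mul, Zsqrtd.re_add, Zsqrtd.im_add] at h1 h2
  obtain ⟨hp0, hq0, hr0, hs0'⟩ := aux_main (2*z₁.re + z₂.re) (2*z₁.im + z₂.im) z₂.re z₂.im
    (by linear_combination h1) (by linarith)
  have hz₂0 : z₂ = 0 := by ext <;> simp [hr0, hs0']
  have hz₁0 : z₁ = 0 := by
    ext <;> simp only [Zsqrtd.re_zero, Zsqrtd.im_zero] <;> omega
  exact hA (by rw [hz₁, hz₂, hz₁0, hz₂0, map_zero])
end

section
/- Let S ⊂ ℂ be the 2^λ-PSK signal set S = {e^{2πik/2^λ} : 0 ≤ k < 2^λ} with λ ≥ 1, and let φ_g = arctan(√5), θ = π/2^λ. For Δx_A = (a₁, a₂), Δx_B = (b₁, b₂) ∈ (ΔS)² with Δx_A ≠ 0 and Δx_B ≠ 0, the determinant a₁·e^{iθ}·(-b₁ sin φ_g + b₂ cos φ_g) - a₂·(b₁ cos φ_g + b₂ sin φ_g) is nonzero. -/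
open Complex IntermediateField Polynomial

noncomputable def zetaC (n : ℕ) : ℂ := Complex.exp (2 * Real.pi * Complex.I / ((2:ℕ) ^ n : ℕ))

noncomputable def KF (n : ℕ) : IntermediateField ℚ ℂ := ℚ⟮zetaC n⟯

lemma zetaC_prim (n : ℕ) : IsPrimitiveRoot (zetaC n) (2 ^ n) :=
  Complex.isPrimitiveRoot_exp _ (pow_ne_zero _ two_ne_zero)

lemma zetaC_integral (n : ℕ) : IsIntegral ℚ (zetaC n) :=
  ((zetaC_prim n).isIntegral (pow_pos two_pos n)).tower_top

lemma zetaC_sq (n : ℕ) : zetaC (n + 1) ^ 2 = zetaC n := by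
  unfold zetaC
  rw [← Complex.exp_nat_mul]
  congr 1
  have h : ((2:ℕ) ^ n : ℂ) ≠ 0 := by
    exact_mod_cast (pow_ne_zero n (two_ne_zero (α := ℂ)))
  push_cast [pow_succ]
  field_simp

lemma zetaC_ne_zero (n : ℕ) : zetaC n ≠ 0 := Complex.exp_ne_zero _

lemma finrank_adjoin_prim {u : ℂ} {m : ℕ} (h : IsPrimitiveRoot u (2 ^ m)) :
    Module.finrank ℚ ℚ⟮u⟯ = 2 ^ (m - 1) := by
  have hint : IsIntegral ℚ u := (h.isIntegral (pow_pos two_pos m)).tower_top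
  rw [IntermediateField.adjoin.finrank hint, ← cyclotomic_eq_minpoly_rat h (pow_pos two_pos m),
    natDegree_cyclotomic]
  rcases Nat.eq_zero_or_pos m with rfl | hm
  · simp
  · rw [Nat.totient_prime_pow Nat.prime_two hm]
    simp [pow_succ]

instance KF_fd (n : ℕ) : FiniteDimensional ℚ (KF n) :=
  IntermediateField.adjoin.finiteDimensional (zetaC_integral n)

lemma finrank_KF (n : ℕ) : Module.finrank ℚ (KF n) = 2 ^ (n - 1) :=
  finrank_adjoin_prim (zetaC_prim n)

lemma not_pow_neg_one {n : ℕ} (hn : 1 ≤ n) {v : ℂ} (hv : v ∈ KF n) :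
    v ^ 2 ^ n ≠ -1 := by
  intro h
  have hv1 : v ^ 2 ^ (n + 1) = 1 := by
    rw [pow_succ, pow_mul, h]; norm_num
  have hord : orderOf v = 2 ^ (n + 1) := by
    have hdvd : orderOf v ∣ 2 ^ (n + 1) := orderOf_dvd_of_pow_eq_one hv1
    obtain ⟨j, hj, hje⟩ := (Nat.dvd_prime_pow Nat.prime_two).1 hdvd
    rcases Nat.lt_or_ge j (n + 1) with hlt | hge
    · exfalso
      have hjn : j ≤ n := Nat.lt_succ_iff.1 hlt
      have : v ^ 2 ^ n = 1 := by
        have : (2:ℕ) ^ n = 2 ^ j * 2 ^ (n - j) := by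
          rw [← pow_add, Nat.add_sub_cancel' hjn]
        rw [this, pow_mul, ← hje, pow_orderOf_eq_one, one_pow]
      rw [this] at h
      exact (by norm_num : (1:ℂ) ≠ -1) h
    · have hj' : j = n + 1 := le_antisymm hj hge
      rw [hje, hj']
  have hprim : IsPrimitiveRoot v (2 ^ (n + 1)) := hord ▸ IsPrimitiveRoot.orderOf v
  have hle : ℚ⟮v⟯ ≤ KF n := adjoin_simple_le_iff.2 hv
  have h1 : Module.finrank ℚ ℚ⟮v⟯ = 2 ^ n := by
    rw [finrank_adjoin_prim hprim]; simp
  have h2 : Module.finrank ℚ ℚ⟮v⟯ ≤ Module.finrank ℚ (KF n) := by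
    have : Module.Finite ℚ ((KF n).toSubmodule) := KF_fd n
    exact Submodule.finrank_mono (by exact hle : ℚ⟮v⟯.toSubmodule ≤ (KF n).toSubmodule)
  rw [h1, finrank_KF] at h2
  exact absurd h2 (by
    have : (2:ℕ) ^ (n - 1) < 2 ^ n := Nat.pow_lt_pow_right (by norm_num) (by omega)
    omega)

lemma zetaC_pow_half {n : ℕ} (hn : 1 ≤ n) : zetaC n ^ 2 ^ (n - 1) = -1 := by
  unfold zetaC
  rw [← Complex.exp_nat_mul, ← Complex.exp_pi_mul_I]
  congr 1
  obtain ⟨m, rfl⟩ : ∃ m, n = m + 1 := ⟨n - 1, by omega⟩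
  simp only [Nat.add_sub_cancel]
  have h : ((2:ℂ)) ^ m ≠ 0 := pow_ne_zero _ two_ne_zero
  push_cast [pow_succ]
  field_simp

lemma zetaC_succ_not_mem {n : ℕ} (hn : 1 ≤ n) : zetaC (n + 1) ∉ KF n := by
  intro hmem
  refine not_pow_neg_one hn hmem ?_
  have := zetaC_pow_half (n := n + 1) (by omega)
  simpa using this

lemma mem_adjoin_sq {x t : ℂ} (hx : IsIntegral ℚ x) (ht : t ∈ ℚ⟮x⟯) :
    ∃ a b : ℂ, a ∈ ℚ⟮x ^ 2⟯ ∧ b ∈ ℚ⟮x ^ 2⟯ ∧ t = a + b * x := by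
  have hsub : t ∈ Algebra.adjoin ℚ ({x} : Set ℂ) := by
    rw [← IntermediateField.adjoin_simple_toSubalgebra_of_isAlgebraic hx.isAlgebraic]
    exact ht
  clear ht
  induction hsub using Algebra.adjoin_induction with
  | mem y hy =>
    rcases hy with rfl
    exact ⟨0, 1, zero_mem _, one_mem _, by ring⟩
  | algebraMap r =>
    exact ⟨algebraMap ℚ ℂ r, 0, IntermediateField.algebraMap_mem _ r, zero_mem _, by ring⟩
  | add y z hy hz ihy ihz =>
    obtain ⟨a, b, ha, hb, rfl⟩ := ihy
    obtain ⟨c, d, hc, hd, rfl⟩ := ihz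
    exact ⟨a + c, b + d, add_mem ha hc, add_mem hb hd, by ring⟩
  | mul y z hy hz ihy ihz =>
    obtain ⟨a, b, ha, hb, rfl⟩ := ihy
    obtain ⟨c, d, hc, hd, rfl⟩ := ihz
    refine ⟨a * c + b * d * x ^ 2, a * d + b * c, ?_, ?_, by ring⟩
    · exact add_mem (mul_mem ha hc) (mul_mem (mul_mem hb hd) (mem_adjoin_simple_self ℚ _))
    · exact add_mem (mul_mem ha hd) (mul_mem hb hc)

lemma rat_sq_ne {q : ℚ} {m : ℕ} (hm : ¬ IsSquare m) : q ^ 2 ≠ (m : ℚ) := by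
  intro h
  have hq : ((q : ℝ)) ^ 2 = (m : ℝ) := by exact_mod_cast h
  have hs : Real.sqrt m = |(q : ℝ)| := by
    rw [← hq, Real.sqrt_sq_eq_abs]
  have hirr := irrational_sqrt_natCast_iff.2 hm
  rw [hs] at hirr
  have : |(q : ℝ)| = ((|q| : ℚ) : ℝ) := by push_cast; rfl
  rw [this] at hirr
  exact Rat.not_irrational _ hirr

lemma zetaC_one : zetaC 1 = -1 := by
  unfold zetaC
  rw [← Complex.exp_pi_mul_I]
  congr 1
  norm_num
  ring

lemma KF_one_rat {t : ℂ} (ht : t ∈ KF 1) : ∃ q : ℚ, t = (q : ℂ) := by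
  have hle : KF 1 ≤ ⊥ := by
    unfold KF
    rw [zetaC_one]
    exact adjoin_simple_le_iff.2 (neg_mem (one_mem ⊥))
  obtain ⟨q, hq⟩ := IntermediateField.mem_bot.1 (hle ht)
  exact ⟨q, by rw [← hq]; simp⟩

lemma zetaC_zero : zetaC 0 = 1 := by
  unfold zetaC
  norm_num [Complex.exp_two_pi_mul_I]

lemma KF_zero_rat {t : ℂ} (ht : t ∈ ℚ⟮zetaC 0⟯) : ∃ q : ℚ, t = (q : ℂ) := by
  rw [zetaC_zero] at ht
  have hle : ℚ⟮(1:ℂ)⟯ ≤ (⊥ : IntermediateField ℚ ℂ) := adjoin_simple_le_iff.2 (one_mem ⊥)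
  obtain ⟨q, hq⟩ := IntermediateField.mem_bot.1 (hle ht)
  exact ⟨q, by rw [← hq]; simp⟩

lemma not_square_5 : ¬ IsSquare (5:ℕ) := by
  rintro ⟨r, hr⟩
  have hb : r ≤ 5 := by nlinarith
  interval_cases r <;> omega

lemma not_square_10 : ¬ IsSquare (10:ℕ) := by
  rintro ⟨r, hr⟩
  have hb : r ≤ 10 := by nlinarith
  interval_cases r <;> omega

lemma key : ∀ n : ℕ, 1 ≤ n → ∀ ω t : ℂ, ω ^ 2 ^ n = 1 → t ∈ KF n → t ^ 2 ≠ 5 * ω := by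
  intro n
  induction n with
  | zero => omega
  | succ n ih =>
    intro _ ω t hω ht h
    haveI : NeZero (2 ^ (n + 1)) := ⟨pow_ne_zero _ two_ne_zero⟩
    obtain ⟨k, hklt, rfl⟩ := (zetaC_prim (n + 1)).eq_pow_of_pow_eq_one hω
    obtain ⟨a, b, ha, hb, rfl⟩ := mem_adjoin_sq (zetaC_integral (n + 1)) ht
    rw [zetaC_sq n] at ha hb
    set ζ' := zetaC (n + 1) with hζ'def
    set ζ := zetaC n with hζdef
    have hζsq : ζ' ^ 2 = ζ := zetaC_sq n
    have hζK : ζ ∈ KF n := mem_adjoin_simple_self ℚ _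
    have hζne : ζ ≠ 0 := zetaC_ne_zero n
    have h5K : (5:ℂ) ∈ KF n := by
      have := IntermediateField.algebraMap_mem (KF n) (5:ℚ); simpa using this
    have h2K : (2:ℂ) ∈ KF n := by
      have := IntermediateField.algebraMap_mem (KF n) (2:ℚ); simpa using this
    rcases Nat.eq_zero_or_pos n with rfl | hn
    · -- base case : a b rational, ζ' = -1
      obtain ⟨p, rfl⟩ := KF_zero_rat ha
      obtain ⟨q, rfl⟩ := KF_zero_rat hb
      have hζ1 : ζ' = -1 := zetaC_one
      rw [hζ1] at h
      rcases Nat.even_or_odd k with he | ho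
      · rw [he.neg_one_pow] at h
        have hq : ((p : ℚ) - q) ^ 2 = ((5:ℕ) : ℚ) := by
          have : (((p - q : ℚ)) : ℂ) ^ 2 = (((5:ℕ) : ℚ) : ℂ) := by push_cast; linear_combination h
          exact_mod_cast this
        exact rat_sq_ne not_square_5 hq
      · rw [ho.neg_one_pow] at h
        have hq : ((p : ℚ) - q) ^ 2 = -5 := by
          have : (((p - q : ℚ)) : ℂ) ^ 2 = ((-5 : ℚ) : ℂ) := by push_cast; linear_combination h
          exact_mod_cast this
        nlinarith [sq_nonneg ((p : ℚ) - q)]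
    · -- inductive step, n ≥ 1
      have hζ'not : ζ' ∉ KF n := zetaC_succ_not_mem hn
      rcases Nat.even_or_odd k with ⟨m, hm⟩ | ⟨m, hm⟩
      · -- k even
        have hωζ : ζ' ^ k = ζ ^ m := by
          rw [hm, ← two_mul, pow_mul, hζsq]
        rw [hωζ] at h
        have hab : (2 * a * b) * ζ' = 5 * ζ ^ m - a ^ 2 - b ^ 2 * ζ := by
          linear_combination h - b ^ 2 * hζsq
        by_cases hab0 : 2 * a * b = 0
        · have hab0' : a = 0 ∨ b = 0 := by
            rcases mul_eq_zero.1 hab0 with h' | h'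
            · rcases mul_eq_zero.1 h' with h'' | h''
              · norm_num at h''
              · exact Or.inl h''
            · exact Or.inr h'
          rcases hab0' with rfl | rfl
          · refine ih hn (ζ ^ (m + 1)) (b * ζ) ?_ (mul_mem hb hζK) ?_
            · rw [← pow_mul, mul_comm (m + 1), pow_mul, (zetaC_prim n).pow_eq_one, one_pow]
            · linear_combination ζ * h - b ^ 2 * ζ * hζsq
          · refine ih hn (ζ ^ m) a ?_ ha ?_
            · rw [← pow_mul, mul_comm m, pow_mul, (zetaC_prim n).pow_eq_one, one_pow]
            · linear_combination h
        · refine hζ'not ?_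
          have hd : ζ' = (5 * ζ ^ m - a ^ 2 - b ^ 2 * ζ) / (2 * a * b) := by
            rw [eq_div_iff hab0]; linear_combination hab
          rw [hd]
          exact div_mem (sub_mem (sub_mem (mul_mem h5K (pow_mem hζK m)) (pow_mem ha 2)) (mul_mem (pow_mem hb 2) hζK)) (mul_mem (mul_mem h2K ha) hb)
      · -- k odd
        have hωζ : ζ' ^ k = ζ ^ m * ζ' := by
          rw [hm, pow_add, pow_mul, hζsq, pow_one]
        rw [hωζ] at h
        have hab : (2 * a * b - 5 * ζ ^ m) * ζ' = -(a ^ 2 + b ^ 2 * ζ) := by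
          linear_combination h - b ^ 2 * hζsq
        by_cases h₀ : 2 * a * b - 5 * ζ ^ m = 0
        · have h₁ : a ^ 2 + b ^ 2 * ζ = 0 := by
            linear_combination hab - ζ' * h₀
          have h₀' : 2 * a * b = 5 * ζ ^ m := by linear_combination h₀
          have hb0 : b ≠ 0 := by
            rintro rfl
            have h5z : (5:ℂ) * ζ ^ m = 0 := by linear_combination -h₀
            rcases mul_eq_zero.1 h5z with h' | h'
            · norm_num at h'
            · exact pow_ne_zero m hζne h'
          have hu : (a / b) ^ 2 = -ζ := by
            rw [div_pow, div_eq_iff (pow_ne_zero 2 hb0)]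
            linear_combination h₁
          rcases Nat.lt_or_ge n 2 with hn2 | hn2
          · -- n = 1
            have hn1 : n = 1 := by omega
            subst hn1
            have hζ1 : ζ = -1 := zetaC_one
            rw [hζ1] at h₀' h₁
            obtain ⟨p, rfl⟩ := KF_one_rat ha
            obtain ⟨q, rfl⟩ := KF_one_rat hb
            have hzz : (((-1:ℂ)) ^ m) ^ 2 = 1 := by
              rw [← pow_mul, mul_comm, pow_mul]
              norm_num
            have h25 : (2 * (p:ℂ) * (q:ℂ)) ^ 2 = 25 := by
              linear_combination (2 * (p:ℂ) * (q:ℂ) + 5 * (-1:ℂ) ^ m) * h₀' + 25 * hzz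
            have hq25 : (2 * p * q : ℚ) ^ 2 = 25 := by
              have : (((2 * p * q : ℚ)) : ℂ) ^ 2 = ((25 : ℚ) : ℂ) := by push_cast; linear_combination h25
              exact_mod_cast this
            have hpq : (p : ℚ) ^ 2 = q ^ 2 := by
              have : ((p:ℚ) : ℂ) ^ 2 = (((q:ℚ)) : ℂ) ^ 2 := by linear_combination h₁
              exact_mod_cast this
            have hfac : ((2 * q ^ 2 - 5) * (2 * q ^ 2 + 5) : ℚ) = 0 := by
              linear_combination hq25 - 4 * (q:ℚ) ^ 2 * hpq
            rcases mul_eq_zero.1 hfac with h' | h'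
            · have h10 : (2 * q : ℚ) ^ 2 = ((10:ℕ) : ℚ) := by push_cast; linear_combination 2 * h'
              exact rat_sq_ne not_square_10 h10
            · nlinarith [sq_nonneg (q:ℚ)]
          · -- n ≥ 2
            have heven : Even ((2:ℕ) ^ (n - 1)) := by
              refine ⟨2 ^ (n - 2), ?_⟩
              rw [← two_mul, ← pow_succ']
              congr 1
              omega
            have hu2 : (a / b) ^ 2 ^ n = -1 := by
              have hsplit : (2:ℕ) ^ n = 2 * 2 ^ (n - 1) := by
                rw [← pow_succ']; congr 1; omega
              rw [hsplit, pow_mul, hu, heven.neg_pow, hζdef, zetaC_pow_half hn]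
            exact not_pow_neg_one hn (div_mem ha hb) hu2
        · refine hζ'not ?_
          have hd : ζ' = -(a ^ 2 + b ^ 2 * ζ) / (2 * a * b - 5 * ζ ^ m) := by
            rw [eq_div_iff h₀]; linear_combination hab
          rw [hd]
          exact div_mem (neg_mem (add_mem (pow_mem ha 2) (mul_mem (pow_mem hb 2) hζK))) (sub_mem (mul_mem (mul_mem h2K ha) hb) (mul_mem h5K (pow_mem hζK m)))

open Complex in
theorem stmt_15 (lam : ℕ) (hlam : 1 ≤ lam)
    (a₁ a₂ b₁ b₂ : ℂ)
    (ha₁ : a₁ ∈ {x : ℂ | ∃ s ∈ {z : ℂ | ∃ k : ℕ, k < 2 ^ lam ∧ z = Complex.exp (2 * Real.pi * k / 2 ^ lam * I)},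
                  ∃ s' ∈ {z : ℂ | ∃ k : ℕ, k < 2 ^ lam ∧ z = Complex.exp (2 * Real.pi * k / 2 ^ lam * I)}, x = s - s'})
    (ha₂ : a₂ ∈ {x : ℂ | ∃ s ∈ {z : ℂ | ∃ k : ℕ, k < 2 ^ lam ∧ z = Complex.exp (2 * Real.pi * k / 2 ^ lam * I)},
                  ∃ s' ∈ {z : ℂ | ∃ k : ℕ, k < 2 ^ lam ∧ z = Complex.exp (2 * Real.pi * k / 2 ^ lam * I)}, x = s - s'})
    (hb₁ : b₁ ∈ {x : ℂ | ∃ s ∈ {z : ℂ | ∃ k : ℕ, k < 2 ^ lam ∧ z = Complex.exp (2 * Real.pi * k / 2 ^ lam * I)},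
                  ∃ s' ∈ {z : ℂ | ∃ k : ℕ, k < 2 ^ lam ∧ z = Complex.exp (2 * Real.pi * k / 2 ^ lam * I)}, x = s - s'})
    (hb₂ : b₂ ∈ {x : ℂ | ∃ s ∈ {z : ℂ | ∃ k : ℕ, k < 2 ^ lam ∧ z = Complex.exp (2 * Real.pi * k / 2 ^ lam * I)},
                  ∃ s' ∈ {z : ℂ | ∃ k : ℕ, k < 2 ^ lam ∧ z = Complex.exp (2 * Real.pi * k / 2 ^ lam * I)}, x = s - s'})
    (hA : (a₁, a₂) ≠ (0, 0)) (hB : (b₁, b₂) ≠ (0, 0)) :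
    let φg : ℝ := Real.arctan (Real.sqrt 5)
    a₁ * Complex.exp ((Real.pi / 2 ^ lam : ℝ) * I) *
        (-b₁ * (Real.sin φg : ℂ) + b₂ * (Real.cos φg : ℂ)) -
      a₂ * (b₁ * (Real.cos φg : ℂ) + b₂ * (Real.sin φg : ℂ)) ≠ 0 := by
  intro φg
  set s5 : ℂ := ((Real.sqrt 5 : ℝ) : ℂ) with hs5def
  have hs5sq : s5 ^ 2 = 5 := by
    rw [hs5def, ← Complex.ofReal_pow, Real.sq_sqrt (by norm_num : (5:ℝ) ≥ 0)]
    norm_num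
  have hcne : Real.cos φg ≠ 0 := (Real.cos_arctan_pos _).ne'
  have hs : Real.sin φg = Real.sqrt 5 * Real.cos φg := by
    show Real.sin (Real.arctan (Real.sqrt 5)) = _
    rw [Real.sin_arctan, Real.cos_arctan]
    ring
  have hsC : ((Real.sin φg : ℝ) : ℂ) = s5 * ((Real.cos φg : ℝ) : ℂ) := by
    rw [hs]; push_cast; ring
  -- membership infrastructure
  have hexp : ∀ k : ℕ, Complex.exp (2 * Real.pi * k / 2 ^ lam * I) = zetaC lam ^ k := by
    intro k
    rw [zetaC, ← Complex.exp_nat_mul]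
    congr 1
    push_cast
    ring
  have hKmem : ∀ x : ℂ, (∃ s ∈ {z : ℂ | ∃ k : ℕ, k < 2 ^ lam ∧ z = Complex.exp (2 * Real.pi * k / 2 ^ lam * I)},
      ∃ s' ∈ {z : ℂ | ∃ k : ℕ, k < 2 ^ lam ∧ z = Complex.exp (2 * Real.pi * k / 2 ^ lam * I)}, x = s - s') →
      x ∈ KF lam := by
    rintro x ⟨s, ⟨k, -, rfl⟩, s', ⟨k', -, rfl⟩, rfl⟩
    rw [hexp, hexp]
    exact sub_mem (pow_mem (mem_adjoin_simple_self ℚ _) _) (pow_mem (mem_adjoin_simple_self ℚ _) _)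
  have ha₁K : a₁ ∈ KF lam := hKmem _ ha₁
  have ha₂K : a₂ ∈ KF lam := hKmem _ ha₂
  have hb₁K : b₁ ∈ KF lam := hKmem _ hb₁
  have hb₂K : b₂ ∈ KF lam := hKmem _ hb₂
  have h5K : (5:ℂ) ∈ KF lam := by
    have := IntermediateField.algebraMap_mem (KF lam) (5:ℚ); simpa using this
  have h6K : (6:ℂ) ∈ KF lam := by
    have := IntermediateField.algebraMap_mem (KF lam) (6:ℚ); simpa using this
  have h2K : (2:ℂ) ∈ KF lam := by
    have := IntermediateField.algebraMap_mem (KF lam) (2:ℚ); simpa using this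
  have hζK : zetaC lam ∈ KF lam := mem_adjoin_simple_self ℚ _
  have hθ : Complex.exp (((Real.pi / 2 ^ lam : ℝ) : ℂ) * I) = zetaC (lam + 1) := by
    rw [zetaC]
    congr 1
    have h2 : ((2:ℂ)) ^ lam ≠ 0 := pow_ne_zero _ two_ne_zero
    push_cast [pow_succ]
    field_simp
  set ζ' : ℂ := zetaC (lam + 1) with hζ'def
  have h5notK : s5 ∉ KF lam := by
    intro hmem
    exact key lam hlam 1 s5 (one_pow _) hmem (by rw [mul_one]; exact hs5sq)
  have claim : ∀ x y : ℂ, x ∈ KF lam → y ∈ KF lam → y = s5 * x → x = 0 ∧ y = 0 := by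
    intro x y hx hy hxy
    by_cases hx0 : x = 0
    · exact ⟨hx0, by rw [hxy, hx0, mul_zero]⟩
    · exfalso
      apply h5notK
      have : s5 = y / x := by rw [hxy]; field_simp
      rw [this]
      exact div_mem hy hx
  have hBne : ¬ (b₁ = 0 ∧ b₂ = 0) := by
    rintro ⟨h1, h2⟩
    exact hB (by rw [h1, h2])
  -- main argument
  intro hdet
  rw [hθ, hsC] at hdet
  have hD : a₁ * ζ' * (b₂ - s5 * b₁) - a₂ * (b₁ + s5 * b₂) = 0 := by
    have hfac : ((Real.cos φg : ℝ) : ℂ) * (a₁ * ζ' * (b₂ - s5 * b₁) - a₂ * (b₁ + s5 * b₂)) = 0 := by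
      linear_combination hdet
    exact (mul_eq_zero.1 hfac).resolve_left (Complex.ofReal_ne_zero.2 hcne)
  by_cases ha₂0 : a₂ = 0
  · have ha₁0 : a₁ ≠ 0 := by
      intro h
      exact hA (by rw [h, ha₂0])
    have hu : b₂ - s5 * b₁ = 0 := by
      have h' : a₁ * ζ' * (b₂ - s5 * b₁) = 0 := by
        rw [ha₂0] at hD; linear_combination hD
      rcases mul_eq_zero.1 h' with h'' | h''
      · exact absurd h'' (mul_ne_zero ha₁0 (zetaC_ne_zero _))
      · exact h''
    obtain ⟨h1, h2⟩ := claim b₁ b₂ hb₁K hb₂K (by linear_combination hu)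
    exact hBne ⟨h1, h2⟩
  · by_cases ha₁0 : a₁ = 0
    · have hv : b₁ + s5 * b₂ = 0 := by
        have h' : a₂ * (b₁ + s5 * b₂) = 0 := by
          rw [ha₁0] at hD; linear_combination -hD
        exact (mul_eq_zero.1 h').resolve_left ha₂0
      obtain ⟨h1, h2⟩ := claim b₂ (-b₁) hb₂K (neg_mem hb₁K) (by linear_combination -hv)
      exact hBne ⟨by simpa using h2, h1⟩
    · -- both a₁ a₂ nonzero
      have hdne : b₂ ^ 2 - 5 * b₁ ^ 2 ≠ 0 := by
        intro hd0
        have hfac2 : (b₂ - s5 * b₁) * (b₂ + s5 * b₁) = 0 := by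
          linear_combination hd0 - b₁ ^ 2 * hs5sq
        rcases mul_eq_zero.1 hfac2 with h' | h'
        · obtain ⟨h1, h2⟩ := claim b₁ b₂ hb₁K hb₂K (by linear_combination h')
          exact hBne ⟨h1, h2⟩
        · obtain ⟨h1, h2⟩ := claim b₁ (-b₂) hb₁K (neg_mem hb₂K) (by linear_combination -h')
          exact hBne ⟨h1, by simpa using h2⟩
      have hdd : a₁ * (b₂ ^ 2 - 5 * b₁ ^ 2) ≠ 0 := mul_ne_zero ha₁0 hdne
      set x : ℂ := a₂ * (6 * b₁ * b₂) / (a₁ * (b₂ ^ 2 - 5 * b₁ ^ 2)) with hxdef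
      set y : ℂ := a₂ * (b₁ ^ 2 + b₂ ^ 2) / (a₁ * (b₂ ^ 2 - 5 * b₁ ^ 2)) with hydef
      have hxK : x ∈ KF lam := div_mem (mul_mem ha₂K (mul_mem (mul_mem h6K hb₁K) hb₂K))
        (mul_mem ha₁K (sub_mem (pow_mem hb₂K 2) (mul_mem h5K (pow_mem hb₁K 2))))
      have hyK : y ∈ KF lam := div_mem (mul_mem ha₂K (add_mem (pow_mem hb₁K 2) (pow_mem hb₂K 2)))
        (mul_mem ha₁K (sub_mem (pow_mem hb₂K 2) (mul_mem h5K (pow_mem hb₁K 2))))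
      have hmul : ζ' * (a₁ * (b₂ ^ 2 - 5 * b₁ ^ 2)) = a₂ * (6 * b₁ * b₂) + a₂ * (b₁ ^ 2 + b₂ ^ 2) * s5 := by
        linear_combination (b₂ + s5 * b₁) * hD + (a₁ * ζ' * b₁ ^ 2 + a₂ * b₁ * b₂) * hs5sq
      have hζ'xy : ζ' = x + y * s5 := by
        rw [hxdef, hydef]
        rw [div_mul_eq_mul_div, ← add_div, eq_div_iff hdd]
        linear_combination hmul
      have hsq : zetaC lam = x ^ 2 + 5 * y ^ 2 + 2 * x * y * s5 := by
        have hz : zetaC lam = ζ' ^ 2 := (zetaC_sq lam).symm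
        rw [hz, hζ'xy]
        linear_combination y ^ 2 * hs5sq
      have hxy0 : x * y = 0 := by
        by_contra hxy
        apply h5notK
        have h2xy : (2:ℂ) * x * y ≠ 0 := by
          rw [mul_assoc]
          exact mul_ne_zero two_ne_zero hxy
        have : s5 = (zetaC lam - x ^ 2 - 5 * y ^ 2) / (2 * x * y) := by
          rw [eq_div_iff h2xy]
          linear_combination -hsq
        rw [this]
        exact div_mem (sub_mem (sub_mem hζK (pow_mem hxK 2)) (mul_mem h5K (pow_mem hyK 2)))
          (mul_mem (mul_mem h2K hxK) hyK)
      rcases mul_eq_zero.1 hxy0 with hx0 | hy0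
      · refine key lam hlam (zetaC lam) (5 * y) ((zetaC_prim lam).pow_eq_one) (mul_mem h5K hyK) ?_
        have hζ'y : ζ' = y * s5 := by rw [hζ'xy, hx0]; ring
        have hz5 : zetaC lam = 5 * y ^ 2 := by
          rw [← zetaC_sq lam, ← hζ'def, hζ'y]
          linear_combination y ^ 2 * hs5sq
        rw [hz5]
        ring
      · apply zetaC_succ_not_mem hlam
        have hζx : ζ' = x := by rw [hζ'xy, hy0]; ring
        rw [← hζ'def, hζx]
        exact hxK
end
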